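/- arXiv:1311.2785 — 4 statements merged into one kernel-verified Lean document; each statement's English description precedes it below -/
import Mathlib

section
/- Suppose the multiset L admits a linear realization P = [x_0,…,x_{v−1}] on {0,…,v−1} in which the vertices v−1 and v−2 are adjacent (a special linear realization of type 1). Then for every positive integer b, the multiset L ∪ {2^b} (L with b extra copies of 2) admits a linear realization on {0,…,v−1+b} in which the two largest vertices are adjacent. -/
/-- Multiset of absolute differences of consecutive entries of a list. -/
def pathDiffs (l : List ℕ) : Multiset ℕ :=
  ↑(List.zipWith (fun x y => max x y - min x y) l l.tail)

/-- `l` is a linear realization of the multiset `L`: a permutation of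
`{0, …, |L|}` whose multiset of consecutive absolute differences is `L`. -/
def IsLinReal (L : Multiset ℕ) (l : List ℕ) : Prop :=
  l.Perm (List.range (Multiset.card L + 1)) ∧ pathDiffs l = L

/-- The cyclic edge-length `ℓ(x,y) = min(|x−y|, v−|x−y|)` in `K_v`. -/
def cycLen (v x y : ℕ) : ℕ := min (max x y - min x y) (v - (max x y - min x y))

def cycDiffs (v : ℕ) (l : List ℕ) : Multiset ℕ :=
  ↑(List.zipWith (cycLen v) l l.tail)

/-- `l` is a cyclic realization of `L`: a Hamiltonian path of `K_v` on
`{0, …, v−1}` (with `v = |L|+1`) whose multiset of cyclic edge-lengths is `L`. -/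
def IsCycReal (L : Multiset ℕ) (l : List ℕ) : Prop :=
  l.Perm (List.range (Multiset.card L + 1)) ∧
    cycDiffs (Multiset.card L + 1) l = L

/-- Vertices `a` and `b` are adjacent (consecutive, in either order) in the path `l`. -/
def AdjIn (a b : ℕ) (l : List ℕ) : Prop :=
  [a, b] <:+: l ∨ [b, a] <:+: l

/-- The endpoints of the path `l` are `0` and `1`. -/
def Ends01 (l : List ℕ) : Prop :=
  (l.head? = some 0 ∧ l.getLast? = some 1) ∨
    (l.head? = some 1 ∧ l.getLast? = some 0)

/-!
Insert the new top vertex `v` between the adjacent vertices `v - 1` and `v - 2`: the edge of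
length `1` between them is replaced by edges of lengths `1` and `2`, so the multiset grows by one
`2`, and now the two largest vertices `v` and `v - 1` are adjacent. Iterating `b` times adds `b`
copies of `2`.
-/

lemma pathDiffs_cons_cons (x y : ℕ) (t : List ℕ) :
    pathDiffs (x :: y :: t) = (max x y - min x y) ::ₘ pathDiffs (y :: t) := rfl

lemma pathDiffs_append_cons (s : List ℕ) (x : ℕ) (t : List ℕ) :
    pathDiffs (s ++ x :: t) = pathDiffs (s ++ [x]) + pathDiffs (x :: t) := by
  induction s with
  | nil => simp [pathDiffs]
  | cons c s ih =>
    cases s with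
    | nil => simp [pathDiffs, Multiset.singleton_add]
    | cons c' s =>
      simp only [List.cons_append] at *
      rw [pathDiffs_cons_cons, pathDiffs_cons_cons, ih, Multiset.cons_add]

lemma pathDiffs_insert_add (s t : List ℕ) (a c b : ℕ) :
    pathDiffs (s ++ a :: c :: b :: t) + {max a b - min a b} =
      pathDiffs (s ++ a :: b :: t) + {max a c - min a c, max c b - min c b} := by
  rw [pathDiffs_append_cons s a (c :: b :: t), pathDiffs_append_cons s a (b :: t),
    pathDiffs_cons_cons, pathDiffs_cons_cons, pathDiffs_cons_cons, add_assoc, add_assoc]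
  congr 1
  simp only [Multiset.insert_eq_cons, ← Multiset.singleton_add]
  abel

lemma perm_range_succ_of_insert {s t : List ℕ} {a b n : ℕ}
    (h : (s ++ a :: b :: t).Perm (List.range n)) :
    (s ++ a :: n :: b :: t).Perm (List.range (n + 1)) := by
  have hmid : (s ++ a :: n :: b :: t).Perm (n :: (s ++ a :: b :: t)) := by
    simpa using List.perm_middle (a := n) (l₁ := s ++ [a]) (l₂ := b :: t)
  rw [List.range_succ]
  exact hmid.trans ((h.cons n).trans (List.perm_append_singleton n _).symm)

/-- `hmax` and `hmin` say that `{a, b} = {|L|, |L| - 1}`. -/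
lemma IsLinReal.insert_top {L : Multiset ℕ} {s t : List ℕ} {a b : ℕ}
    (h : IsLinReal L (s ++ a :: b :: t))
    (hmax : max a b = Multiset.card L) (hmin : min a b + 1 = Multiset.card L) :
    IsLinReal (L + {2}) (s ++ a :: (Multiset.card L + 1) :: b :: t) := by
  obtain ⟨hperm, hdiffs⟩ := h
  refine ⟨by simpa using perm_range_succ_of_insert hperm, ?_⟩
  have hnew : ({max a (Multiset.card L + 1) - min a (Multiset.card L + 1),
      max (Multiset.card L + 1) b - min (Multiset.card L + 1) b} : Multiset ℕ) =
      {max a b - min a b} + {2} := by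
    rcases le_total a b with hab | hab
    · rw [show max a (Multiset.card L + 1) - min a (Multiset.card L + 1) = 2 by omega,
        show max (Multiset.card L + 1) b - min (Multiset.card L + 1) b = 1 by omega,
        show max a b - min a b = 1 by omega]
      decide
    · rw [show max a (Multiset.card L + 1) - min a (Multiset.card L + 1) = 1 by omega,
        show max (Multiset.card L + 1) b - min (Multiset.card L + 1) b = 2 by omega,
        show max a b - min a b = 1 by omega]
      decide
  have := pathDiffs_insert_add s t a (Multiset.card L + 1) b
  rw [hnew, hdiffs, add_comm {max a b - min a b}, ← add_assoc] at this
  exact add_right_cancel this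

lemma IsLinReal.exists_adjIn_card_succ {L : Multiset ℕ} {l : List ℕ} (h : IsLinReal L l)
    (hadj : AdjIn (Multiset.card L) (Multiset.card L - 1) l) :
    ∃ l', IsLinReal (L + {2}) l' ∧ AdjIn (Multiset.card L + 1) (Multiset.card L) l' := by
  have hlen : l.length = Multiset.card L + 1 := by simpa using h.1.length_eq
  rcases hadj with ⟨s, t, rfl⟩ | ⟨s, t, rfl⟩
  all_goals
    have hpos : 1 ≤ Multiset.card L := by simp at hlen; omega
    simp only [List.append_assoc, List.cons_append, List.nil_append] at h
  · refine ⟨_, h.insert_top (by omega) (by omega), .inr ⟨s, (Multiset.card L - 1) :: t, by simp⟩⟩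
  · refine ⟨_, h.insert_top (by omega) (by omega), .inl ⟨s ++ [Multiset.card L - 1], t, by simp⟩⟩

theorem stmt1 (L : Multiset ℕ) (l : List ℕ) (h : IsLinReal L l)
    (hadj : AdjIn (Multiset.card L) (Multiset.card L - 1) l) :
    ∀ b : ℕ, 1 ≤ b → ∃ l' : List ℕ,
      IsLinReal (L + Multiset.replicate b 2) l' ∧
      AdjIn (Multiset.card L + b) (Multiset.card L + b - 1) l' := by
  suffices ∀ b : ℕ, ∃ l' : List ℕ, IsLinReal (L + Multiset.replicate b 2) l' ∧
      AdjIn (Multiset.card L + b) (Multiset.card L + b - 1) l' from fun b _ => this b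
  intro b
  induction b with
  | zero => exact ⟨l, by simpa using h, by simpa using hadj⟩
  | succ b ih =>
    obtain ⟨l', hreal, hadj'⟩ := ih
    have hcard : Multiset.card (L + Multiset.replicate b 2) = Multiset.card L + b := by simp
    obtain ⟨l'', hreal'', hadj''⟩ := hreal.exists_adjIn_card_succ (by rwa [hcard])
    refine ⟨l'', ?_, by simpa [hcard, add_assoc] using hadj''⟩
    rwa [Multiset.replicate_succ, ← Multiset.singleton_add, add_comm {2}, ← add_assoc]
end

section
/- Suppose the multiset L of size v−1 admits a linear realization on {0,…,v−1} whose endpoints are 0 and 1 (a special linear realization of type 2). Then for every integer b ≥ 2, the multiset L ∪ {2^b} admits a linear realization on {0,…,v−1+b} whose endpoints are 0 and 1. -/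
lemma pathDiffs_singleton (x : ℕ) : pathDiffs [x] = 0 := rfl

lemma pathDiffs_append_singleton_cons (l₁ l₂ : List ℕ) (x y : ℕ) :
    pathDiffs (l₁ ++ x :: y :: l₂) =
      pathDiffs (l₁ ++ [x]) + (max x y - min x y) ::ₘ pathDiffs (y :: l₂) := by
  induction l₁ with
  | nil => simp [pathDiffs_cons_cons, pathDiffs_singleton]
  | cons a t ih =>
    cases t with
    | nil => simp [pathDiffs_cons_cons, pathDiffs_singleton, Multiset.cons_swap]
    | cons a' t' =>
      simp only [List.cons_append] at ih ⊢
      rw [pathDiffs_cons_cons, ih, pathDiffs_cons_cons, Multiset.cons_add]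

lemma pathDiffs_append {l₁ l₂ : List ℕ} {x y : ℕ} (hx : l₁.getLast? = some x)
    (hy : l₂.head? = some y) :
    pathDiffs (l₁ ++ l₂) = pathDiffs l₁ + (max x y - min x y) ::ₘ pathDiffs l₂ := by
  obtain ⟨t₁, rfl⟩ := List.getLast?_eq_some_iff.1 hx
  obtain ⟨t₂, rfl⟩ := List.head?_eq_some_iff.1 hy
  rw [List.append_assoc, List.singleton_append, pathDiffs_append_singleton_cons]

lemma pathDiffs_reverse (l : List ℕ) : pathDiffs l.reverse = pathDiffs l := by
  induction l with
  | nil => rfl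
  | cons x t ih =>
    cases t with
    | nil => rfl
    | cons y t' =>
      rw [List.reverse_cons, pathDiffs_append (x := y) (y := x) (by simp) rfl, ih,
        pathDiffs_singleton, pathDiffs_cons_cons, max_comm, min_comm, Multiset.add_cons, add_zero]

lemma pathDiffs_map_add (a : ℕ) (l : List ℕ) : pathDiffs (l.map (a + ·)) = pathDiffs l := by
  unfold pathDiffs
  rw [← List.map_tail, List.zipWith_map]
  congr 2
  funext x y
  omega

lemma IsLinReal.reverse {L : Multiset ℕ} {l : List ℕ} (h : IsLinReal L l) :
    IsLinReal L l.reverse :=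
  ⟨(List.reverse_perm l).trans h.1, (pathDiffs_reverse l).trans h.2⟩

/-- `ascByTwo k = [k % 2, k % 2 + 2, …, k]`. -/
def ascByTwo : ℕ → List ℕ
  | 0 => [0]
  | 1 => [1]
  | k + 2 => ascByTwo k ++ [k + 2]

lemma ascByTwo_head? (k : ℕ) : (ascByTwo k).head? = some (k % 2) := by
  induction k using ascByTwo.induct with
  | case1 | case2 => rfl
  | case3 k ih =>
    rw [ascByTwo, List.head?_append, ih, Option.some_or]
    exact congrArg some (by omega)

lemma ascByTwo_getLast? (k : ℕ) : (ascByTwo k).getLast? = some k := by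
  rcases k with _ | _ | k <;> simp [ascByTwo]

lemma pathDiffs_ascByTwo (k : ℕ) : pathDiffs (ascByTwo k) = Multiset.replicate (k / 2) 2 := by
  induction k using ascByTwo.induct with
  | case1 | case2 => rfl
  | case3 k ih =>
    rw [ascByTwo, pathDiffs_append (ascByTwo_getLast? k) rfl, ih, pathDiffs_singleton,
      show max k (k + 2) - min k (k + 2) = 2 by omega, show (k + 2) / 2 = k / 2 + 1 by omega,
      Multiset.replicate_succ, Multiset.add_cons, add_zero]

lemma ascByTwo_append_ascByTwo_succ_perm (k : ℕ) :
    (ascByTwo k ++ ascByTwo (k + 1)).Perm (List.range (k + 2)) := by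
  induction k with
  | zero => decide
  | succ k ih =>
    rw [show ascByTwo (k + 1 + 1) = ascByTwo k ++ [k + 2] from rfl, List.range_succ,
      ← List.append_assoc]
    exact (List.perm_append_comm.append_right _).trans (ih.append_right _)

def extendByTwos (c : ℕ) (l : List ℕ) : List ℕ :=
  ascByTwo c ++ l.map (c + 2 + ·) ++ (ascByTwo (c + 1)).reverse

section extendByTwos

variable (c : ℕ) {l : List ℕ}

open List in
lemma extendByTwos_perm {n : ℕ} (hl : l.Perm (List.range n)) :
    (extendByTwos c l).Perm (List.range (c + 2 + n)) := by
  rw [List.range_add]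
  calc extendByTwos c l ~ ascByTwo c ++ ((ascByTwo (c + 1)).reverse ++ l.map (c + 2 + ·)) := by
        rw [extendByTwos, List.append_assoc]
        exact List.perm_append_comm.append_left _
      _ ~ ascByTwo c ++ ascByTwo (c + 1) ++ (List.range n).map (c + 2 + ·) := by
        rw [← List.append_assoc]
        exact (((List.reverse_perm _).append_left _).append_right _).trans
          ((hl.map _).append_left _)
      _ ~ List.range (c + 2) ++ (List.range n).map (c + 2 + ·) :=
        (ascByTwo_append_ascByTwo_succ_perm c).append_right _

lemma pathDiffs_extendByTwos (h₀ : l.head? = some 0) (h₁ : l.getLast? = some 1) :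
    pathDiffs (extendByTwos c l) = pathDiffs l + Multiset.replicate (c + 2) 2 := by
  have hlast : (ascByTwo c ++ l.map (c + 2 + ·)).getLast? = some (c + 2 + 1) := by
    rw [List.getLast?_append, List.getLast?_map, h₁]; rfl
  have hhead : (ascByTwo (c + 1)).reverse.head? = some (c + 1) := by
    rw [List.head?_reverse, ascByTwo_getLast?]
  rw [extendByTwos, pathDiffs_append hlast hhead,
    pathDiffs_append (ascByTwo_getLast? c) (by rw [List.head?_map, h₀]; rfl),
    pathDiffs_reverse, pathDiffs_map_add, pathDiffs_ascByTwo, pathDiffs_ascByTwo]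
  beta_reduce
  rw [show max c (c + 2 + 0) - min c (c + 2 + 0) = 2 by omega,
    show max (c + 2 + 1) (c + 1) - min (c + 2 + 1) (c + 1) = 2 by omega,
    show c + 2 = c / 2 + 1 + ((c + 1) / 2 + 1) by omega, Multiset.replicate_add,
    Multiset.replicate_succ, Multiset.replicate_succ]
  simp only [← Multiset.singleton_add]
  abel

lemma IsLinReal.extendByTwos {L : Multiset ℕ} (h : IsLinReal L l) (h₀ : l.head? = some 0)
    (h₁ : l.getLast? = some 1) :
    IsLinReal (L + Multiset.replicate (c + 2) 2) (extendByTwos c l) := by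
  refine ⟨?_, by rw [pathDiffs_extendByTwos c h₀ h₁, h.2]⟩
  convert extendByTwos_perm c h.1 using 2
  simp only [Multiset.card_add, Multiset.card_replicate]
  omega

lemma ends01_extendByTwos : Ends01 (extendByTwos c l) := by
  have hhead : (extendByTwos c l).head? = some (c % 2) := by
    rw [extendByTwos, List.append_assoc, List.head?_append, ascByTwo_head?]; rfl
  have hlast : (extendByTwos c l).getLast? = some ((c + 1) % 2) := by
    rw [extendByTwos, List.getLast?_append, List.getLast?_reverse, ascByTwo_head?]; rfl
  rcases Nat.mod_two_eq_zero_or_one c with hc | hc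
  · exact Or.inl ⟨by rw [hhead, hc], by rw [hlast, Nat.succ_mod_two_eq_one_iff.2 hc]⟩
  · exact Or.inr ⟨by rw [hhead, hc], by rw [hlast, Nat.succ_mod_two_eq_zero_iff.2 hc]⟩

end extendByTwos

theorem stmt2 (L : Multiset ℕ) (l : List ℕ) (h : IsLinReal L l)
    (he : Ends01 l) :
    ∀ b : ℕ, 2 ≤ b → ∃ l' : List ℕ,
      IsLinReal (L + Multiset.replicate b 2) l' ∧ Ends01 l' := by
  intro b hb
  obtain ⟨c, rfl⟩ : ∃ c, b = c + 2 := ⟨b - 2, by omega⟩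
  rcases he with ⟨h₀, h₁⟩ | ⟨h₁, h₀⟩
  · exact ⟨extendByTwos c l, h.extendByTwos c h₀ h₁, ends01_extendByTwos c⟩
  · exact ⟨extendByTwos c l.reverse,
      h.reverse.extendByTwos c (by rwa [List.head?_reverse]) (by rwa [List.getLast?_reverse]),
      ends01_extendByTwos c⟩
end

section
/- For every even integer t ≥ 4 with t ≡ 0 (mod 4) and every integer k ≥ 0, the path obtained by the arithmetic progressions [0, 4, 8, …, 4k+4, then 4k+2, 4k−2, …, 2, then 3, 7, …, 4k+3, then 4k+1, 4k−3, …, 1] is a linear realization of the multiset {1, 2^2, 4^{4k+1}} on {0,…,4k+4} with endpoints 0 and 1. In particular, {1, 2^2, 4^{4k+1}} admits a special linear realization of type 2. -/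
/-!
The path runs through the residue classes `0, 2, 3, 1 (mod 4)` in turn, each as an arithmetic
progression of step `4`, so it visits every vertex of `{0, …, 4k+4}` exactly once. Inside a class
every step is `4`, and the three junctions `4k+4 → 4k+2`, `2 → 3`, `4k+3 → 4k+1` contribute
`2, 1, 2`.
-/

theorem List.Nodup.perm_range {l : List ℕ} {n : ℕ} (hl : l.Nodup) (hlt : ∀ x ∈ l, x < n)
    (hlen : l.length = n) : l.Perm (List.range n) :=
  (hl.subperm fun x hx => List.mem_range.2 (hlt x hx)).perm_of_length_le (by simp [hlen])

lemma pathDiffs_cons_of_head? {x y : ℕ} {l : List ℕ} (h : l.head? = some y) :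
    pathDiffs (x :: l) = (max x y - min x y) ::ₘ pathDiffs l := by
  obtain ⟨y, t⟩ | _ := l <;> simp_all [pathDiffs]

lemma pathDiffs_map_range_append {f : ℕ → ℕ} {d m : ℕ}
    (hf : ∀ i < m, max (f i) (f (i + 1)) - min (f i) (f (i + 1)) = d) (t : List ℕ) :
    pathDiffs ((List.range (m + 1)).map f ++ t) =
      Multiset.replicate m d + pathDiffs (f m :: t) := by
  induction m generalizing t with
  | zero => simp
  | succ m ih =>
    rw [List.range_succ, List.map_append, List.append_assoc, List.map_singleton,
      List.singleton_append, ih (fun i hi => hf i (by omega)), pathDiffs_cons_of_head? rfl,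
      hf m (by omega), Multiset.replicate_succ, Multiset.add_cons, Multiset.cons_add]

lemma pathDiffs_map_range {f : ℕ → ℕ} {d m : ℕ}
    (hf : ∀ i < m, max (f i) (f (i + 1)) - min (f i) (f (i + 1)) = d) :
    pathDiffs ((List.range (m + 1)).map f) = Multiset.replicate m d := by
  simpa [pathDiffs] using pathDiffs_map_range_append hf []

def progressionPath (k : ℕ) : List ℕ :=
  (List.range (k+2)).map (fun i => 4*i) ++
    (List.range (k+1)).map (fun i => 4*k+2 - 4*i) ++
    (List.range (k+1)).map (fun i => 3 + 4*i) ++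
    (List.range (k+1)).map (fun i => 4*k+1 - 4*i)

lemma progressionPath_nodup (k : ℕ) : (progressionPath k).Nodup := by
  simp only [progressionPath, List.nodup_append, List.nodup_map_iff_inj_on List.nodup_range,
    List.mem_append, List.mem_map, List.mem_range, ne_eq,
    forall_exists_index, and_imp, or_imp, forall_and, forall_apply_eq_imp_iff₂]
  refine ⟨⟨⟨?_, ?_, ?_⟩, ?_, ⟨?_, ?_⟩⟩, ?_, ⟨⟨?_, ?_⟩, ?_⟩⟩ <;> omega

lemma progressionPath_lt (k : ℕ) : ∀ x ∈ progressionPath k, x < 4 * k + 5 := by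
  simp only [progressionPath, List.mem_append, List.mem_map, List.mem_range]
  omega

lemma pathDiffs_progressionPath (k : ℕ) :
    pathDiffs (progressionPath k) =
      {1} + Multiset.replicate 2 2 + Multiset.replicate (4*k+1) 4 := by
  have hhead (f : ℕ → ℕ) (m : ℕ) (t : List ℕ) :
      ((List.range (m + 1)).map f ++ t).head? = some (f 0) := by
    simp [List.range_succ_eq_map]
  rw [progressionPath, List.append_assoc, List.append_assoc,
    pathDiffs_map_range_append (d := 4) (by omega), pathDiffs_cons_of_head? (hhead ..),
    pathDiffs_map_range_append (d := 4) (by omega), pathDiffs_cons_of_head? (hhead ..),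
    pathDiffs_map_range_append (d := 4) (by omega),
    pathDiffs_cons_of_head? (y := 4 * k + 1) (by simp [List.range_succ_eq_map]),
    pathDiffs_map_range (d := 4) (by omega)]
  ext a
  simp only [Multiset.count_add, Multiset.count_cons, Multiset.count_replicate,
    Multiset.count_singleton]
  split_ifs <;> omega

lemma progressionPath_ends01 (k : ℕ) : Ends01 (progressionPath k) := by
  left
  constructor
  · simp [progressionPath, List.range_succ_eq_map]
  · rw [progressionPath, List.getLast?_append, List.range_succ]
    simp

theorem stmt4 (k : ℕ) :
    ∃ l : List ℕ,
      l = (List.range (k+2)).map (fun i => 4*i) ++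
          (List.range (k+1)).map (fun i => 4*k+2 - 4*i) ++
          (List.range (k+1)).map (fun i => 3 + 4*i) ++
          (List.range (k+1)).map (fun i => 4*k+1 - 4*i) ∧
      IsLinReal ({1} + Multiset.replicate 2 2 + Multiset.replicate (4*k+1) 4) l ∧
      Ends01 l := by
  refine ⟨progressionPath k, rfl, ⟨?_, pathDiffs_progressionPath k⟩,
    progressionPath_ends01 k⟩
  have hcard : Multiset.card ({1} + Multiset.replicate 2 2 + Multiset.replicate (4*k+1) 4)
      = 4 * k + 4 := by simp
  rw [hcard]
  exact (progressionPath_nodup k).perm_range (progressionPath_lt k)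
    (by simp [progressionPath]; omega)
end

section
/- For every integer k ≥ 0, the sequence [0, 4, 8, …, 4k+8, then 3, 7, …, 4k+7, then 4k+5, 4k+1, …, 1, then 2, 6, …, 4k+6] is a Hamiltonian path of the complete graph on {0,…,4k+8} whose multiset of cyclic edge-lengths min(|x−y|, (4k+9)−|x−y|) equals {1, 2, 4^{4k+6}}, i.e., a cyclic realization of {1, 2, 4^{4k+6}}. -/
/-!
The path runs through the residue classes `0, 3, 1, 2 (mod 4)` of `{0, …, 4k+8}` in turn, the
class of `1` downwards, so it covers all `4k+9` vertices with `4k+9` entries. Inside a class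
consecutive vertices differ by `4`; the three junctions `4k+8 → 3`, `4k+7 → 4k+5` and `1 → 2`
have cyclic lengths `(4k+9) − (4k+5) = 4`, `2` and `1`.
-/

open List

section
variable {α β : Type*} (f : α → α → β)

theorem List.zipWith_tail_append {l₁ l₂ : List α} (h₁ : l₁ ≠ []) (h₂ : l₂ ≠ []) :
    zipWith f (l₁ ++ l₂) (l₁ ++ l₂).tail =
      zipWith f l₁ l₁.tail ++ f (l₁.getLast h₁) (l₂.head h₂) :: zipWith f l₂ l₂.tail := by
  obtain ⟨b, l₂, rfl⟩ := exists_cons_of_ne_nil h₂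
  induction l₁ with
  | nil => contradiction
  | cons a l ih =>
    cases l with
    | nil => rfl
    | cons a' l =>
      simp only [cons_append, tail_cons, zipWith_cons_cons, getLast_cons_cons] at ih ⊢
      rw [ih (cons_ne_nil _ _)]

theorem List.zipWith_tail_map_range {c : β} {g : ℕ → α} {n : ℕ}
    (h : ∀ i, i + 1 < n → f (g i) (g (i + 1)) = c) :
    zipWith f ((range n).map g) ((range n).map g).tail = replicate (n - 1) c := by
  refine eq_replicate_iff.2 ⟨by simp, fun b hb => ?_⟩
  obtain ⟨i, hi, rfl⟩ := List.mem_iff_getElem.1 hb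
  simp only [length_zipWith, length_tail, length_map, length_range] at hi
  simp only [getElem_zipWith, getElem_tail, getElem_map, getElem_range]
  exact h i (by omega)
end

def cycRealPath (k : ℕ) : List ℕ :=
  (range (k+3)).map (fun i => 4*i) ++ (range (k+2)).map (fun i => 3 + 4*i) ++
    (range (k+2)).map (fun i => 4*k+5 - 4*i) ++ (range (k+2)).map (fun i => 2 + 4*i)

theorem range_subset_cycRealPath (k : ℕ) : range (4*k+9) ⊆ cycRealPath k := by
  intro x hx
  rw [mem_range] at hx
  simp only [cycRealPath, mem_append, mem_map, mem_range]
  rcases (by omega : x % 4 = 0 ∨ x % 4 = 1 ∨ x % 4 = 2 ∨ x % 4 = 3) with h | h | h | h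
  · exact Or.inl <| Or.inl <| Or.inl ⟨x / 4, by omega, by omega⟩
  · exact Or.inl <| Or.inr ⟨k + 1 - x / 4, by omega, by omega⟩
  · exact Or.inr ⟨x / 4, by omega, by omega⟩
  · exact Or.inl <| Or.inl <| Or.inr ⟨x / 4, by omega, by omega⟩

theorem length_cycRealPath (k : ℕ) : (cycRealPath k).length = 4*k+9 := by
  simp only [cycRealPath, length_append, length_map, length_range]
  omega

theorem cycRealPath_perm_range (k : ℕ) : (cycRealPath k).Perm (range (4*k+9)) :=
  ((nodup_range.subperm (range_subset_cycRealPath k)).perm_of_length_le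
    (by rw [length_cycRealPath, length_range])).symm

theorem zipWith_cycLen_cycRealPath (k : ℕ) :
    zipWith (cycLen (4*k+9)) (cycRealPath k) (cycRealPath k).tail =
      replicate (k+2) 4 ++ 4 :: replicate (k+1) 4 ++ 2 :: replicate (k+1) 4 ++
        1 :: replicate (k+1) 4 := by
  have hA : ∀ i, i + 1 < k + 3 → cycLen (4*k+9) (4*i) (4*(i+1)) = 4 := by
    intro i _; unfold cycLen; omega
  have hB : ∀ i, i + 1 < k + 2 → cycLen (4*k+9) (3 + 4*i) (3 + 4*(i+1)) = 4 := by
    intro i _; unfold cycLen; omega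
  have hC : ∀ i, i + 1 < k + 2 → cycLen (4*k+9) (4*k+5 - 4*i) (4*k+5 - 4*(i+1)) = 4 := by
    intro i _; unfold cycLen; omega
  have hD : ∀ i, i + 1 < k + 2 → cycLen (4*k+9) (2 + 4*i) (2 + 4*(i+1)) = 4 := by
    intro i _; unfold cycLen; omega
  unfold cycRealPath
  simp (disch := simp) only [zipWith_tail_append, getLast_append_of_ne_nil, getLast_map,
    getLast_range, head_map, head_range]
  rw [zipWith_tail_map_range _ hA, zipWith_tail_map_range _ hB, zipWith_tail_map_range _ hC,
    zipWith_tail_map_range _ hD]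
  simp only [mul_zero, add_zero, Nat.sub_zero]
  rw [show cycLen (4*k+9) (4*(k+3-1)) 3 = 4 by unfold cycLen; omega,
    show cycLen (4*k+9) (3 + 4*(k+2-1)) (4*k+5) = 2 by unfold cycLen; omega,
    show cycLen (4*k+9) (4*k+5 - 4*(k+2-1)) 2 = 1 by unfold cycLen; omega]
  rfl

theorem cycDiffs_cycRealPath (k : ℕ) :
    cycDiffs (4*k+9) (cycRealPath k) = 1 ::ₘ 2 ::ₘ Multiset.replicate (4*k+6) 4 := by
  rw [cycDiffs, zipWith_cycLen_cycRealPath]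
  simp only [← Multiset.coe_add, ← Multiset.cons_coe, Multiset.coe_replicate, Multiset.add_cons,
    Multiset.cons_add, ← Multiset.replicate_add]
  rw [← Multiset.replicate_succ]
  congr 3
  omega

theorem stmt13 (k : ℕ) :
    ∃ l : List ℕ,
      l = (List.range (k+3)).map (fun i => 4*i) ++
          (List.range (k+2)).map (fun i => 3 + 4*i) ++
          (List.range (k+2)).map (fun i => 4*k+5 - 4*i) ++
          (List.range (k+2)).map (fun i => 2 + 4*i) ∧
      IsCycReal (1 ::ₘ 2 ::ₘ Multiset.replicate (4*k+6) 4) l := by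
  have hv : Multiset.card (1 ::ₘ 2 ::ₘ Multiset.replicate (4*k+6) 4) + 1 = 4*k+9 := by simp
  refine ⟨cycRealPath k, rfl, ?_, ?_⟩ <;> rw [hv]
  · exact cycRealPath_perm_range k
  · exact cycDiffs_cycRealPath k
end
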